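/- Let A : Matrix (Fin m) (Fin n) ℤ with a bouquet decomposition c_1, …, c_s and bouquet matrix A_B, and assume each c_i is componentwise nonnegative. Then there exists a minimal Markov basis of A_B all of whose elements have full support (every coordinate nonzero) if and only if there exists a minimal Markov basis of A all of whose elements have full support. -/
import Mathlib


/-- The integer kernel of an integer matrix. -/
def kerZ {m n : ℕ} (A : Matrix (Fin m) (Fin n) ℤ) : Set (Fin n → ℤ) :=
  {u | A.mulVec u = 0}

/-- The componentwise positive part `u⁺` of an integer vector. -/
def posPartZ {n : ℕ} (u : Fin n → ℤ) : Fin n → ℤ := fun i => max (u i) 0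

/-- The componentwise negative part `u⁻` of an integer vector. -/
def negPartZ {n : ℕ} (u : Fin n → ℤ) : Fin n → ℤ := fun i => max (-u i) 0

/-- `u = v + w` is a proper conformal decomposition within `kerZ A`. -/
def IsProperConformalDecomp {m n : ℕ} (A : Matrix (Fin m) (Fin n) ℤ)
    (u v w : Fin n → ℤ) : Prop :=
  v ∈ kerZ A ∧ w ∈ kerZ A ∧ v ≠ 0 ∧ w ≠ 0 ∧ u = v + w ∧
    posPartZ u = posPartZ v + posPartZ w ∧ negPartZ u = negPartZ v + negPartZ w

/-- `u` belongs to the Graver basis of `A`: it is a nonzero element of the integer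
kernel admitting no proper conformal decomposition. -/
def InGraver {m n : ℕ} (A : Matrix (Fin m) (Fin n) ℤ) (u : Fin n → ℤ) : Prop :=
  u ∈ kerZ A ∧ u ≠ 0 ∧ ¬ ∃ v w, IsProperConformalDecomp A u v w

/-- `u = v + w` is a proper semiconformal decomposition within `kerZ A`. -/
def IsProperSemiconformalDecomp {m n : ℕ} (A : Matrix (Fin m) (Fin n) ℤ)
    (u v w : Fin n → ℤ) : Prop :=
  v ∈ kerZ A ∧ w ∈ kerZ A ∧ v ≠ 0 ∧ w ≠ 0 ∧ u = v + w ∧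
    ∀ i, (0 < v i → 0 ≤ w i) ∧ (w i < 0 → v i ≤ 0)

/-- `c 0, …, c (s-1)` is a bouquet decomposition of `A`: the supports are nonempty,
pairwise disjoint and cover `Fin n`, and every integer kernel element of `A` is,
on the support of each `c i`, an integer multiple of `c i`. -/
def IsBouquetDecomposition {m n s : ℕ} (A : Matrix (Fin m) (Fin n) ℤ)
    (c : Fin s → Fin n → ℤ) : Prop :=
  (∀ i, (Function.support (c i)).Nonempty) ∧
  (∀ i i', i ≠ i' → Disjoint (Function.support (c i)) (Function.support (c i'))) ∧
  (∀ j, ∃ i, c i j ≠ 0) ∧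
  (∀ v ∈ kerZ A, ∀ i, ∃ t : ℤ, ∀ j ∈ Function.support (c i), v j = t * c i j)

/-- The bouquet matrix `A_B`, whose `i`-th column is `A.mulVec (c i)`. -/
def bouquetMatrix {m n s : ℕ} (A : Matrix (Fin m) (Fin n) ℤ)
    (c : Fin s → Fin n → ℤ) : Matrix (Fin m) (Fin s) ℤ :=
  Matrix.of fun k i => A.mulVec (c i) k

/-- The map `B(u) = Σ_i u_i • c_i`. -/
def Bmap {n s : ℕ} (c : Fin s → Fin n → ℤ) (u : Fin s → ℤ) : Fin n → ℤ :=
  ∑ i, u i • c i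

/-- `M` is a Markov basis of `A`. -/
def IsMarkovBasis {m n : ℕ} (A : Matrix (Fin m) (Fin n) ℤ)
    (M : Finset (Fin n → ℤ)) : Prop :=
  (↑M ⊆ kerZ A) ∧
  ∀ w v : Fin n → ℤ, (∀ j, 0 ≤ w j) → (∀ j, 0 ≤ v j) → w - v ∈ kerZ A →
    ∃ (r : ℕ) (u : Fin r → Fin n → ℤ), (∀ k, u k ∈ M) ∧
      w - v = ∑ k, u k ∧
      ∀ p : ℕ, 1 ≤ p → p ≤ r → ∀ j,
        0 ≤ w j - ∑ k ∈ Finset.univ.filter (fun k : Fin r => (k : ℕ) < p), u k j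

/-- `M` is a minimal Markov basis of `A`: no proper subset of it is a Markov basis. -/
def IsMinimalMarkovBasis {m n : ℕ} (A : Matrix (Fin m) (Fin n) ℤ)
    (M : Finset (Fin n → ℤ)) : Prop :=
  IsMarkovBasis A M ∧ ∀ M' ⊂ M, ¬ IsMarkovBasis A M'

section Aux

variable {m n s : ℕ} (A : Matrix (Fin m) (Fin n) ℤ) (c : Fin s → Fin n → ℤ)

lemma Bmap_apply (u : Fin s → ℤ) (j : Fin n) :
    Bmap c u j = ∑ i, u i * c i j := by
  simp [Bmap, Finset.sum_apply]

lemma support_unique (hc : IsBouquetDecomposition A c) {i i' : Fin s} {j : Fin n}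
    (h : c i j ≠ 0) (h' : c i' j ≠ 0) : i = i' := by
  by_contra hne
  exact Set.disjoint_left.mp (hc.2.1 i i' hne) (Function.mem_support.mpr h)
    (Function.mem_support.mpr h')

lemma Bmap_single (hc : IsBouquetDecomposition A c) {i : Fin s} {j : Fin n}
    (hj : c i j ≠ 0) (u : Fin s → ℤ) : Bmap c u j = u i * c i j := by
  rw [Bmap_apply]
  refine Finset.sum_eq_single i (fun i' _ hne => ?_) (by simp)
  have : c i' j = 0 := by
    by_contra h
    exact hne (support_unique A c hc h hj)
  simp [this]

lemma Bmap_injective (hc : IsBouquetDecomposition A c) :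
    Function.Injective (Bmap c) := by
  intro u u' h
  funext i
  obtain ⟨j, hj⟩ := hc.1 i
  have hj' : c i j ≠ 0 := hj
  have h1 : u i * c i j = u' i * c i j := by
    rw [← Bmap_single A c hc hj', ← Bmap_single A c hc hj', h]
  exact mul_right_cancel₀ hj' h1

lemma Bmap_sub (u v : Fin s → ℤ) : Bmap c (u - v) = Bmap c u - Bmap c v := by
  funext j
  simp [Bmap_apply, sub_mul, Finset.sum_sub_distrib]

lemma Bmap_finsetSum {ι : Type*} (t : Finset ι) (u : ι → Fin s → ℤ) :
    Bmap c (∑ k ∈ t, u k) = ∑ k ∈ t, Bmap c (u k) := by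
  funext j
  rw [Finset.sum_apply, Bmap_apply]
  simp only [Bmap_apply, Finset.sum_apply, Finset.sum_mul]
  rw [Finset.sum_comm]

lemma mulVec_Bmap (u : Fin s → ℤ) :
    A.mulVec (Bmap c u) = (bouquetMatrix A c).mulVec u := by
  funext k
  simp only [Matrix.mulVec, dotProduct, bouquetMatrix, Matrix.of_apply, Bmap_apply,
    Finset.mul_sum, Finset.sum_mul]
  rw [Finset.sum_comm]
  exact Finset.sum_congr rfl fun i _ => Finset.sum_congr rfl fun j _ => by ring

lemma kerZ_iff (u : Fin s → ℤ) :
    u ∈ kerZ (bouquetMatrix A c) ↔ Bmap c u ∈ kerZ A := by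
  simp only [kerZ, Set.mem_setOf_eq, mulVec_Bmap]

lemma exists_preimage (hc : IsBouquetDecomposition A c) {v : Fin n → ℤ}
    (hv : v ∈ kerZ A) : ∃ u, u ∈ kerZ (bouquetMatrix A c) ∧ Bmap c u = v := by
  choose t ht using hc.2.2.2 v hv
  refine ⟨t, ?_, ?_⟩
  · rw [kerZ_iff]
    convert hv using 1
    funext j
    obtain ⟨i, hij⟩ := hc.2.2.1 j
    rw [Bmap_single A c hc hij, ← ht i j (Function.mem_support.mpr hij)]
  · funext j
    obtain ⟨i, hij⟩ := hc.2.2.1 j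
    rw [Bmap_single A c hc hij, ← ht i j (Function.mem_support.mpr hij)]


lemma markov_image (hc : IsBouquetDecomposition A c) (hcnonneg : ∀ i j, 0 ≤ c i j)
    {M : Finset (Fin s → ℤ)} (hM : IsMarkovBasis (bouquetMatrix A c) M) :
    IsMarkovBasis A (M.image (Bmap c)) := by
  constructor
  · intro x hx
    simp only [Finset.coe_image, Set.mem_image, Finset.mem_coe] at hx
    obtain ⟨u, hu, rfl⟩ := hx
    exact (kerZ_iff A c u).mp (hM.1 hu)
  · intro w v hw hv hwv
    obtain ⟨t, ht, hBt⟩ := exists_preimage A c hc hwv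
    have htpos : posPartZ t - negPartZ t = t := by
      funext i; simp only [Pi.sub_apply, posPartZ, negPartZ]; omega
    obtain ⟨r, u, huM, hsum, hpart⟩ := hM.2 (posPartZ t) (negPartZ t)
      (fun i => le_max_right _ _) (fun i => le_max_right _ _) (by rw [htpos]; exact ht)
    rw [htpos] at hsum
    refine ⟨r, fun k => Bmap c (u k), fun k => Finset.mem_image_of_mem _ (huM k), ?_, ?_⟩
    · rw [← Bmap_finsetSum, ← hsum, hBt]
    · intro p hp1 hpr j
      obtain ⟨i, hij⟩ := hc.2.2.1 j
      have ha : 0 < c i j := lt_of_le_of_ne (hcnonneg i j) (Ne.symm hij)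
      have h1 := hpart p hp1 hpr i
      have h2 : ∑ k ∈ Finset.univ.filter (fun k : Fin r => (k : ℕ) < p), Bmap c (u k) j
          = (∑ k ∈ Finset.univ.filter (fun k : Fin r => (k : ℕ) < p), u k i) * c i j := by
        rw [Finset.sum_mul]
        exact Finset.sum_congr rfl fun k _ => Bmap_single A c hc hij (u k)
      rw [h2]
      have htj : t i * c i j = w j - v j := by
        rw [← Bmap_single A c hc hij t, hBt]; rfl
      have hwj : max (t i) 0 * c i j ≤ w j := by
        rcases le_or_gt (t i) 0 with h | h
        · rw [max_eq_right h, zero_mul]; exact hw j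
        · rw [max_eq_left h.le, htj]
          have := hv j; linarith
      have hS : (∑ k ∈ Finset.univ.filter (fun k : Fin r => (k : ℕ) < p), u k i)
          ≤ max (t i) 0 := by
        simp only [posPartZ] at h1; linarith
      nlinarith [mul_le_mul_of_nonneg_right hS ha.le]

lemma markov_preimage (hc : IsBouquetDecomposition A c) (hcnonneg : ∀ i j, 0 ≤ c i j)
    {M : Finset (Fin n → ℤ)} (hM : IsMarkovBasis A M) :
    IsMarkovBasis (bouquetMatrix A c)
      (M.preimage (Bmap c) ((Bmap_injective A c hc).injOn)) := by
  constructor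
  · intro x hx
    rw [Finset.mem_coe, Finset.mem_preimage] at hx
    exact (kerZ_iff A c x).mpr (hM.1 hx)
  · intro w' v' hw' hv' ht
    have hBnn : ∀ (z : Fin s → ℤ), (∀ i, 0 ≤ z i) → ∀ j, 0 ≤ Bmap c z j := by
      intro z hz j
      rw [Bmap_apply]
      exact Finset.sum_nonneg fun i _ => mul_nonneg (hz i) (hcnonneg i j)
    have hker : Bmap c w' - Bmap c v' ∈ kerZ A := by
      rw [← Bmap_sub]; exact (kerZ_iff A c _).mp ht
    obtain ⟨r, u, huM, hsum, hpart⟩ := hM.2 (Bmap c w') (Bmap c v')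
      (hBnn w' hw') (hBnn v' hv') hker
    have hex : ∀ k, ∃ u', u' ∈ kerZ (bouquetMatrix A c) ∧ Bmap c u' = u k :=
      fun k => exists_preimage A c hc (hM.1 (huM k))
    choose u' hu'ker hu'B using hex
    refine ⟨r, u', fun k => Finset.mem_preimage.mpr (by rw [hu'B k]; exact huM k), ?_, ?_⟩
    · apply Bmap_injective A c hc
      rw [Bmap_sub, Bmap_finsetSum]
      simp only [hu'B]
      exact hsum
    · intro p hp1 hpr i
      obtain ⟨j, hj⟩ := hc.1 i
      have hij : c i j ≠ 0 := hj
      have ha : 0 < c i j := lt_of_le_of_ne (hcnonneg i j) (Ne.symm hij)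
      have h1 := hpart p hp1 hpr j
      have h2 : ∑ k ∈ Finset.univ.filter (fun k : Fin r => (k : ℕ) < p), u k j
          = (∑ k ∈ Finset.univ.filter (fun k : Fin r => (k : ℕ) < p), u' k i) * c i j := by
        rw [Finset.sum_mul]
        exact Finset.sum_congr rfl fun k _ => by
          rw [← hu'B k, Bmap_single A c hc hij]
      rw [h2, Bmap_single A c hc hij w'] at h1
      nlinarith
end Aux

lemma image_ssubset_of_injective {α β : Type*} [DecidableEq β] {f : α → β}
    (hf : Function.Injective f) {N M : Finset α} (h : N ⊂ M) :
    N.image f ⊂ M.image f := by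
  refine ⟨Finset.image_subset_image h.1, fun hle => h.2 fun x hx => ?_⟩
  obtain ⟨y, hy, hyx⟩ := Finset.mem_image.mp (hle (Finset.mem_image_of_mem f hx))
  rwa [← hf hyx]

theorem generic_iff_bouquet_generic {m n s : ℕ}
    (A : Matrix (Fin m) (Fin n) ℤ) (c : Fin s → Fin n → ℤ)
    (hc : IsBouquetDecomposition A c)
    (hcnonneg : ∀ i j, 0 ≤ c i j) :
    (∃ M : Finset (Fin s → ℤ), IsMinimalMarkovBasis (bouquetMatrix A c) M ∧
        ∀ u ∈ M, ∀ i, u i ≠ 0) ↔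
      (∃ M : Finset (Fin n → ℤ), IsMinimalMarkovBasis A M ∧
        ∀ u ∈ M, ∀ j, u j ≠ 0) := by
  have hinj := Bmap_injective A c hc
  constructor
  · rintro ⟨M, ⟨hM, hmin⟩, hfull⟩
    refine ⟨M.image (Bmap c), ⟨markov_image A c hc hcnonneg hM, ?_⟩, ?_⟩
    · intro N hN hNM
      have hNsub : ↑N ⊆ kerZ A := hNM.1
      have hN₀ : IsMarkovBasis (bouquetMatrix A c) (N.preimage (Bmap c) hinj.injOn) :=
        markov_preimage A c hc hcnonneg hNM
      refine hmin (N.preimage (Bmap c) hinj.injOn) ⟨?_, ?_⟩ hN₀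
      · intro x hx
        have hBx : Bmap c x ∈ N := Finset.mem_preimage.mp hx
        obtain ⟨y, hy, hyx⟩ := Finset.mem_image.mp (hN.1 hBx)
        rwa [← hinj hyx]
      · intro hMsub
        refine hN.2 fun x hx => ?_
        obtain ⟨y, hy, rfl⟩ := Finset.mem_image.mp hx
        exact Finset.mem_preimage.mp (hMsub hy)
    · intro x hx j
      obtain ⟨u, hu, rfl⟩ := Finset.mem_image.mp hx
      obtain ⟨i, hij⟩ := hc.2.2.1 j
      rw [Bmap_single A c hc hij]
      exact mul_ne_zero (hfull u hu i) hij
  · rintro ⟨M, ⟨hM, hmin⟩, hfull⟩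
    set M₀ := M.preimage (Bmap c) hinj.injOn with hM₀def
    have himg : M₀.image (Bmap c) = M := by
      apply Finset.Subset.antisymm
      · intro x hx
        obtain ⟨y, hy, rfl⟩ := Finset.mem_image.mp hx
        exact Finset.mem_preimage.mp hy
      · intro x hx
        obtain ⟨u, _, huB⟩ := exists_preimage A c hc (hM.1 hx)
        exact Finset.mem_image.mpr ⟨u, Finset.mem_preimage.mpr (by rwa [huB]), huB⟩
    refine ⟨M₀, ⟨markov_preimage A c hc hcnonneg hM, ?_⟩, ?_⟩
    · intro N₀ hN₀ hMarkov
      have : IsMarkovBasis A (N₀.image (Bmap c)) := markov_image A c hc hcnonneg hMarkov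
      refine hmin (N₀.image (Bmap c)) ?_ this
      rw [← himg]
      exact image_ssubset_of_injective hinj hN₀
    · intro u hu i
      have hx : Bmap c u ∈ M := Finset.mem_preimage.mp hu
      obtain ⟨j, hj⟩ := hc.1 i
      have hij : c i j ≠ 0 := hj
      have hne := hfull _ hx j
      rw [Bmap_single A c hc hij] at hne
      exact fun h0 => hne (by rw [h0, zero_mul])
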